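/- arXiv:2204.13055 — 3 statements merged into one kernel-verified Lean document; each statement's English description precedes it below -/
import Mathlib

section
/- Let p be a prime, G a group acting on a finite set X, and Q, E ≤ G subgroups such that E is a p-group normalized by Q. Let O ⊆ X be an orbit of Q that is stabilized setwise by E, and suppose that E does not act trivially on O, i.e. there exist e ∈ E and x ∈ O with e·x ≠ x. Then p divides |O|. -/
attribute [local instance] Classical.propDecidable

noncomputable section

namespace QF

/-! ## Group-theoretic notions -/

/-- `H` is a normal subgroup of `K` (as subgroups of an ambient group `G`). -/
def NormalIn {G : Type*} [Group G] (H K : Subgroup G) : Prop :=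
  H ≤ K ∧ ∀ k ∈ K, ∀ h ∈ H, k * h * k⁻¹ ∈ H

/-- `L` is a subnormal subgroup of `G`: there is a finite chain of subgroups from `L` to `G`,
each normal in the next. -/
def IsSubnormal {G : Type*} [Group G] (L : Subgroup G) : Prop :=
  ∃ (n : ℕ) (c : ℕ → Subgroup G), c 0 = L ∧ c n = ⊤ ∧ ∀ i < n, NormalIn (c i) (c (i + 1))

/-- `L` is quasisimple: `L = [L,L]` and `L/Z(L)` is a nonabelian simple group. -/
def IsQuasisimple {G : Type*} [Group G] (L : Subgroup G) : Prop :=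
  ⁅L, L⁆ = L ∧ IsSimpleGroup (↥L ⧸ Subgroup.center ↥L) ∧
    ∃ a b : ↥L ⧸ Subgroup.center ↥L, a * b ≠ b * a

/-- A component of a group: a subnormal quasisimple subgroup. -/
def IsComponent {G : Type*} [Group G] (L : Subgroup G) : Prop :=
  IsSubnormal L ∧ IsQuasisimple L

/-- The Fitting subgroup: the subgroup generated by all nilpotent normal subgroups. -/
def fittingSubgroup (G : Type*) [Group G] : Subgroup G :=
  sSup {N : Subgroup G | N.Normal ∧ Group.IsNilpotent ↥N}

/-- `E(G)`: the subgroup generated by all components of `G`. -/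
def layer (G : Type*) [Group G] : Subgroup G :=
  sSup {L : Subgroup G | IsComponent L}

/-- The generalized Fitting subgroup `F*(G) = F(G) ⬝ E(G)`. -/
def genFitting (G : Type*) [Group G] : Subgroup G :=
  fittingSubgroup G ⊔ layer G

/-- `O_p(G) = 1`: every normal `p`-subgroup of `G` is trivial. -/
def OpTrivial (p : ℕ) (G : Type*) [Group G] : Prop :=
  ∀ N : Subgroup G, N.Normal → IsPGroup p ↥N → N = ⊥

/-- `E` is an elementary abelian `p`-subgroup (possibly trivial). -/
def IsElemAb (p : ℕ) {G : Type*} [Group G] (E : Subgroup G) : Prop :=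
  (∀ x ∈ E, ∀ y ∈ E, x * y = y * x) ∧ ∀ x ∈ E, x ^ p = 1

/-- The Quillen poset `A_p(H)` of nontrivial elementary abelian `p`-subgroups of `G`
contained in the subgroup `H`, regarded as a set of subgroups of `G`. -/
def apIn (p : ℕ) {G : Type*} [Group G] (H : Subgroup G) : Set (Subgroup G) :=
  {E | E ≠ ⊥ ∧ IsElemAb p E ∧ E ≤ H}

/-- The `p`-outer poset of `L` in `G`: nontrivial elementary abelian `p`-subgroups `B`
of `N_G(L)` with `B ∩ (L C_G(L)) = 1`. -/
def outPoset (p : ℕ) {G : Type*} [Group G] (L : Subgroup G) : Set (Subgroup G) :=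
  {B | B ≠ ⊥ ∧ IsElemAb p B ∧ B ≤ Subgroup.normalizer (L : Set G) ∧
    B ⊓ (L ⊔ Subgroup.centralizer (L : Set G)) = ⊥}

/-- The `p`-rank of a group: the largest `n` such that `K` contains an elementary abelian
`p`-subgroup of order `p ^ n`. -/
def pRank (p : ℕ) (K : Type*) [Group K] : ℕ :=
  sSup {n : ℕ | ∃ E : Subgroup K, IsElemAb p E ∧ Nat.card ↥E = p ^ n}

/-- The `p`-local `q`-rank of a group `K`: the maximum of the `q`-ranks of normalizers of
nontrivial `p`-subgroups. -/
def pLocalRank (p q : ℕ) (K : Type*) [Group K] : ℕ :=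
  sSup {n : ℕ | ∃ P : Subgroup K, P ≠ ⊥ ∧ IsPGroup p ↥P ∧
    ∃ E : Subgroup K, E ≤ Subgroup.normalizer (P : Set K) ∧ IsElemAb q E ∧ Nat.card ↥E = q ^ n}

/-- A group is `q`-elementary if it is the (internal) direct product of a cyclic group and
a `q`-group. -/
def qElementary (q : ℕ) (G : Type*) [Group G] : Prop :=
  ∃ C R : Subgroup G, IsCyclic ↥C ∧ IsPGroup q ↥R ∧
    (∀ c ∈ C, ∀ r ∈ R, c * r = r * c) ∧ C ⊓ R = ⊥ ∧ C ⊔ R = ⊤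

/-! ## The augmented rational chain complex of a finite poset

We represent a rational simplicial chain of (degree `k - 1`) of a poset `α` as a function
`Finset α → ℚ` supported on the `k`-element chains of `α`. -/

/-- The coefficient of the face `t` in the boundary of the simplex `s`: if `t ⊆ s` with
exactly one element `x` of `s` deleted, this is `(-1) ^ (number of elements of s below x)`. -/
def bdryCoeff {α : Type*} [PartialOrder α] (s t : Finset α) : ℚ :=
  if t ⊆ s ∧ t.card + 1 = s.card then
    ∑ x ∈ s \ t, (-1 : ℚ) ^ (s.filter fun y => y < x).card
  else 0

/-- The simplicial boundary operator (on functions `Finset α → ℚ`). -/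
def bdryFun {α : Type*} [PartialOrder α] (f : Finset α → ℚ) : Finset α → ℚ :=
  fun t => ∑ᶠ s : Finset α, bdryCoeff s t * f s

/-- `f` is a chain of size `k` (i.e. simplicial degree `k - 1`) of the subposet `S` of `α`:
it is supported on totally ordered `k`-element subsets of `S`. -/
def SuppOn {α : Type*} [PartialOrder α] (S : Set α) (k : ℕ) (f : Finset α → ℚ) : Prop :=
  ∀ s, f s ≠ 0 → s.card = k ∧ IsChain (· ≤ ·) (↑s : Set α) ∧ ↑s ⊆ S

/-- `f` is a cycle of size `k` (degree `k - 1`) of the augmented rational chain complex of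
the subposet `S`. -/
def IsCycleOn {α : Type*} [PartialOrder α] (S : Set α) (k : ℕ) (f : Finset α → ℚ) : Prop :=
  SuppOn S k f ∧ bdryFun f = 0

/-- `f` is a boundary of size `k` (degree `k - 1`) in the augmented rational chain complex of
the subposet `S`. -/
def IsBoundaryOn {α : Type*} [PartialOrder α] (S : Set α) (k : ℕ) (f : Finset α → ℚ) : Prop :=
  ∃ g : Finset α → ℚ, SuppOn S (k + 1) g ∧ bdryFun g = f

/-- The reduced rational homology of the subposet `S` is nonzero in degree `k - 1`. -/
def RHomNZ {α : Type*} [PartialOrder α] (S : Set α) (k : ℕ) : Prop :=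
  ∃ f : Finset α → ℚ, IsCycleOn S k f ∧ ¬ IsBoundaryOn S k f

/-- The reduced Euler characteristic of the subposet `S`:
`χ̃(S) = ∑_{n ≥ -1} (-1)^n f_n(S)` where `f_n` is the number of `(n+1)`-element chains. -/
def redEuler {α : Type*} [PartialOrder α] (S : Set α) : ℤ :=
  ∑ᶠ s : Finset α,
    if IsChain (· ≤ ·) (↑s : Set α) ∧ ↑s ⊆ S then (-1 : ℤ) ^ (s.card + 1) else 0

/-! ## Chains in a subcomplex of the order complex -/

/-- `f` is a chain of size `k` supported on the subcomplex `M` (together with the empty chain,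
for the augmentation). -/
def SuppM {α : Type*} [PartialOrder α] (M : Set (Finset α)) (k : ℕ) (f : Finset α → ℚ) : Prop :=
  ∀ s, f s ≠ 0 → s.card = k ∧ (s = ∅ ∨ s ∈ M)

/-- `f` is a cycle of size `k` of the (augmented) chain complex of the subcomplex `M`. -/
def IsCycleM {α : Type*} [PartialOrder α] (M : Set (Finset α)) (k : ℕ) (f : Finset α → ℚ) :
    Prop :=
  SuppM M k f ∧ bdryFun f = 0

/-- `f` is a boundary of size `k` in the (augmented) chain complex of the subcomplex `M`. -/
def IsBoundaryM {α : Type*} [PartialOrder α] (M : Set (Finset α)) (k : ℕ) (f : Finset α → ℚ) :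
    Prop :=
  ∃ g : Finset α → ℚ, SuppM M (k + 1) g ∧ bdryFun g = f

/-! ## Quillen-conjecture properties -/

/-- `G` satisfies (H-QC) at `p`: if `O_p(G) = 1` then `A_p(G)` has nonzero reduced rational
homology in some degree. -/
def HQC (p : ℕ) (G : Type*) [Group G] : Prop :=
  OpTrivial p G → ∃ k : ℕ, RHomNZ (apIn p (⊤ : Subgroup G)) k

/-- `K` has Quillen dimension at `p`: if `O_p(K) = 1` then `A_p(K)` has nonzero reduced
rational homology in degree `m_p(K) - 1`. -/
def QDp (p : ℕ) (K : Type*) [Group K] : Prop :=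
  OpTrivial p K → RHomNZ (apIn p (⊤ : Subgroup K)) (pRank p K)

/-- The fixed-point subposet `A_p(H)^Q` under conjugation by the subgroup `Q`. -/
def apFixed (p : ℕ) {G : Type*} [Group G] (H Q : Subgroup G) : Set (Subgroup G) :=
  {E | E ∈ apIn p H ∧ ∀ x ∈ Q, ∀ g : G, g ∈ E ↔ x * g * x⁻¹ ∈ E}

/-- The fixed-point subposet `A_p(H)^g` under conjugation by the element `g`. -/
def apFixedElt (p : ℕ) {G : Type*} [Group G] (H : Subgroup G) (g : G) : Set (Subgroup G) :=
  {E | E ∈ apIn p H ∧ ∀ h : G, h ∈ E ↔ g * h * g⁻¹ ∈ E}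

/-- Property `R(2)` for a (nonabelian simple) group `L`. -/
def PropertyR2 (L : Type*) [Group L] : Prop :=
  ∃ Q : Subgroup L, qElementary 3 ↥Q ∧ Odd (Nat.card ↥Q) ∧ ¬ OpTrivial 3 ↥Q ∧
    ¬ ((3 : ℤ) ∣ redEuler (apFixed 2 (⊤ : Subgroup L) Q)) ∧
    ∀ E : Subgroup (MulAut L), E ≠ ⊥ → IsElemAb 2 E →
      E ≤ Subgroup.centralizer
        ((Subgroup.map (MulAut.conj : L →* MulAut L) Q : Subgroup (MulAut L)) : Set (MulAut L)) →
      E ≤ (MulAut.conj : L →* MulAut L).range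

/-! ## The pre-join of posets and the initial shuffle product -/

/-- The pre-join of `X` and `Y`: the poset `(C⁻X × C⁻Y) \ {(⊥, ⊥)}`. -/
abbrev PreJoin (X Y : Type*) := {p : WithBot X × WithBot Y // p ≠ (⊥, ⊥)}

/-- The embedding of `X` into the pre-join, `x ↦ (x, ⊥)`. -/
def inX {X Y : Type*} (x : X) : PreJoin X Y :=
  ⟨((x : WithBot X), ⊥), fun h => WithBot.coe_ne_bot (congrArg Prod.fst h)⟩

/-- The embedding of `Y` into the pre-join, `y ↦ (⊥, y)`. -/
def inY {X Y : Type*} (y : Y) : PreJoin X Y :=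
  ⟨(⊥, (y : WithBot Y)), fun h => WithBot.coe_ne_bot (congrArg Prod.snd h)⟩

/-- The element `(x, y)` of the pre-join. -/
def inXY {X Y : Type*} (x : X) (y : Y) : PreJoin X Y :=
  ⟨((x : WithBot X), (y : WithBot Y)), fun h => WithBot.coe_ne_bot (congrArg Prod.fst h)⟩

/-- `c` is a shuffle chain for the pair `(a, b)`: a maximal chain of the grid poset determined
by the `X`-part of `a` and by `b` (with the bottom `(⊥, ⊥)` removed), i.e. a chain of the
pre-join of cardinality `|a_X| + |b|` whose coordinates come from `a` and `b`. -/
def gridOK {X Y W : Type*} [PartialOrder X] [PartialOrder Y] [PartialOrder W]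
    (ιP : PreJoin X Y ↪o W) (a b : Finset W) (c : Finset (PreJoin X Y)) : Prop :=
  IsChain (· ≤ ·) (↑c : Set (PreJoin X Y)) ∧
  c.card = (a.filter fun w => ∃ x : X, w = ιP (inX x)).card + b.card ∧
  ∀ q ∈ c, (q.1.1 = ⊥ ∨ ∃ x : X, q.1.1 = (x : WithBot X) ∧ ιP (inX x) ∈ a) ∧
    (q.1.2 = ⊥ ∨ ∃ y : Y, q.1.2 = (y : WithBot Y) ∧ ιP (inY y) ∈ b)

/-- The number of inversions of the shuffle chain `c` (the number of cells of the
`a_X × b` rectangle lying below the corresponding lattice path). -/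
def invCount {X Y W : Type*} [PartialOrder X] [PartialOrder Y] [PartialOrder W]
    (ιP : PreJoin X Y ↪o W) (a b : Finset W) (c : Finset (PreJoin X Y)) : ℕ :=
  Set.ncard {xy : X × Y | ιP (inX xy.1) ∈ a ∧ ιP (inY xy.2) ∈ b ∧
    ∀ q ∈ c, q.1.1 = (xy.1 : WithBot X) → (xy.2 : WithBot Y) ≤ q.1.2}

/-- The coefficient of the chain `e` of `W` in the initial shuffle product `T(a, b)`. -/
def Tcoeff {X Y Z W : Type*} [PartialOrder X] [PartialOrder Y] [PartialOrder Z] [PartialOrder W]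
    (ιP : PreJoin X Y ↪o W) (ιZ : Z ↪o W) (a b e : Finset W) : ℚ :=
  ∑ᶠ c : Finset (PreJoin X Y),
    if gridOK ιP a b c ∧
        e = c.image (fun q => ιP q) ∪ a.filter (fun w => ∃ z : Z, w = ιZ z) then
      (-1 : ℚ) ^ invCount ιP a b c
    else 0

/-- The initial shuffle product `T_*(f ⊗ g)`, as a function on `Finset W`. -/
def Tmap {X Y Z W : Type*} [PartialOrder X] [PartialOrder Y] [PartialOrder Z] [PartialOrder W]
    (ιP : PreJoin X Y ↪o W) (ιZ : Z ↪o W) (f g : Finset W → ℚ) : Finset W → ℚ :=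
  fun e => ∑ᶠ a : Finset W, ∑ᶠ b : Finset W, f a * g b * Tcoeff ιP ιZ a b e

end QF

/-! A `p`-group acting on an orbit of size prime to `p` fixes a point of it. Since `Q` normalizes
`E`, it permutes the fixed points of `E`; as `Q` is transitive on the orbit, `E` then fixes the
whole orbit. -/

theorem Subgroup.smul_mem_fixedPoints_of_mem_normalizer {G α : Type*} [Group G] [MulAction G α]
    {H : Subgroup G} {g : G} (hg : g ∈ Subgroup.normalizer (H : Set G)) {a : α}
    (ha : a ∈ MulAction.fixedPoints H α) : g • a ∈ MulAction.fixedPoints H α := by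
  rintro ⟨h, hh⟩
  have hconj : g⁻¹ * h * g ∈ H := (Subgroup.mem_normalizer_iff''.mp hg h).mp hh
  calc h • g • a = g • (g⁻¹ * h * g) • a := by
        simp only [smul_smul, mul_assoc, mul_inv_cancel_left]
    _ = g • a := congrArg (g • ·) (ha ⟨_, hconj⟩)

theorem Subgroup.orbit_subset_fixedPoints_of_le_normalizer {G α : Type*} [Group G]
    [MulAction G α] {Q H : Subgroup G} (hQ : Q ≤ Subgroup.normalizer (H : Set G)) {a b : α}
    (hb : b ∈ MulAction.orbit Q a) (hfix : b ∈ MulAction.fixedPoints H α) :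
    MulAction.orbit Q a ⊆ MulAction.fixedPoints H α := by
  rw [← MulAction.orbit_eq_iff.mpr hb]
  rintro _ ⟨q, rfl⟩
  exact Subgroup.smul_mem_fixedPoints_of_mem_normalizer (hQ q.2) hfix

theorem IsPGroup.exists_mem_fixedPoints_of_not_dvd_card {p : ℕ} [Fact p.Prime]
    {P α : Type*} [Group P] [MulAction P α] (hP : IsPGroup p P) {s : Set α}
    (hs : ∀ g : P, ∀ y ∈ s, g • y ∈ s) (hdvd : ¬ p ∣ Nat.card s) :
    ∃ y ∈ s, y ∈ MulAction.fixedPoints P α := by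
  let s' : SubMulAction P α := ⟨s, fun {g} {_} hy => hs g _ hy⟩
  obtain ⟨⟨y, hys⟩, hy⟩ := hP.nonempty_fixed_point_of_prime_not_dvd_card s' hdvd
  exact ⟨y, hys, fun g => congrArg Subtype.val (hy g)⟩

namespace QF

theorem statement16_general {p : ℕ} (hp : p.Prime) {G X : Type*} [Group G] [MulAction G X]
    (Q E : Subgroup G) (hE : IsPGroup p ↥E)
    (hnorm : ∀ q ∈ Q, ∀ e ∈ E, q * e * q⁻¹ ∈ E)
    (x₀ : X) (O : Set X) (hO : O = {y : X | ∃ g ∈ Q, y = g • x₀})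
    (hstab : ∀ e ∈ E, ∀ y ∈ O, e • y ∈ O)
    (hnontriv : ∃ e ∈ E, ∃ y ∈ O, e • y ≠ y) :
    p ∣ Nat.card ↥O := by
  have : Fact p.Prime := ⟨hp⟩
  have hO_orbit : O = MulAction.orbit Q x₀ := by
    ext y
    simp only [hO, MulAction.mem_orbit_iff, Subtype.exists, Subgroup.mk_smul, Set.mem_ofPred_eq,
      eq_comm (a := y), exists_prop]
  by_contra hdvd
  obtain ⟨y, hyO, hy⟩ :=
    hE.exists_mem_fixedPoints_of_not_dvd_card (fun e => hstab e e.2) hdvd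
  obtain ⟨e, he, z, hzO, hez⟩ := hnontriv
  rw [hO_orbit] at hyO hzO
  have hfixed := Subgroup.orbit_subset_fixedPoints_of_le_normalizer
    (Subgroup.le_normalizer_iff.mpr hnorm) hyO hy
  exact hez (hfixed hzO ⟨e, he⟩)

/-- if `E` is a `p`-subgroup normalized by `Q`, and `O` is a `Q`-orbit stabilized
setwise by `E` on which `E` acts nontrivially, then `p` divides `|O|`. -/
theorem statement16 {p : ℕ} (hp : p.Prime) {G X : Type*} [Group G] [MulAction G X]
    [Finite X] (Q E : Subgroup G) (hE : IsPGroup p ↥E)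
    (hnorm : ∀ q ∈ Q, ∀ e ∈ E, q * e * q⁻¹ ∈ E)
    (x₀ : X) (O : Set X) (hO : O = {y : X | ∃ g ∈ Q, y = g • x₀})
    (hstab : ∀ e ∈ E, ∀ y ∈ O, e • y ∈ O)
    (hnontriv : ∃ e ∈ E, ∃ y ∈ O, e • y ≠ y) :
    p ∣ Nat.card ↥O :=
  statement16_general hp Q E hE hnorm x₀ O hO hstab hnontriv

end QF
end
end

section
/- Let p be a prime and X a finite set, and let Q be a subgroup of the symmetric group on X that acts transitively on X. Suppose p does not divide |X|. Then every p-subgroup E of the symmetric group on X that is normalized by Q is trivial. -/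
attribute [local instance] Classical.propDecidable

noncomputable section

namespace QF

open Equiv MulAction

theorem apply_mem_fixedPoints_of_conj_mem {X : Type*} {E : Subgroup (Perm X)} {σ : Perm X}
    (hσ : ∀ e ∈ E, σ⁻¹ * e * σ ∈ E) {x : X} (hx : x ∈ fixedPoints E X) :
    σ x ∈ fixedPoints E X := fun e => by
  have h : (σ⁻¹ * e * σ) x = x := hx ⟨_, hσ e e.2⟩
  rw [Perm.mul_apply, Perm.mul_apply, Perm.inv_eq_iff_eq] at h
  exact h

theorem eq_bot_of_fixedPoints_nonempty {X : Type*} {Q E : Subgroup (Perm X)}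
    (htrans : ∀ x y : X, ∃ σ ∈ Q, σ x = y) (hnorm : ∀ q ∈ Q, ∀ e ∈ E, q * e * q⁻¹ ∈ E)
    (hfix : (fixedPoints E X).Nonempty) : E = ⊥ := by
  obtain ⟨x₀, hx₀⟩ := hfix
  have hall : ∀ y, y ∈ fixedPoints E X := fun y => by
    obtain ⟨σ, hσQ, rfl⟩ := htrans x₀ y
    refine apply_mem_fixedPoints_of_conj_mem (fun e he => ?_) hx₀
    simpa using hnorm σ⁻¹ (inv_mem hσQ) e he
  exact (Subgroup.eq_bot_iff_forall E).2 fun e he => Perm.ext fun y => hall y ⟨e, he⟩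

theorem statement17_general {p : ℕ} (hp : p.Prime) {X : Type*}
    (Q : Subgroup (Equiv.Perm X)) (htrans : ∀ x y : X, ∃ σ ∈ Q, σ x = y)
    (hnd : ¬ p ∣ Nat.card X)
    (E : Subgroup (Equiv.Perm X)) (hE : IsPGroup p ↥E)
    (hnorm : ∀ q ∈ Q, ∀ e ∈ E, q * e * q⁻¹ ∈ E) :
    E = ⊥ :=
  have : Fact p.Prime := ⟨hp⟩
  eq_bot_of_fixedPoints_nonempty htrans hnorm
    (hE.nonempty_fixed_point_of_prime_not_dvd_card X hnd)

/-- if `Q ≤ Sym(X)` is transitive on the finite set `X` and `p ∤ |X|`, then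
every `p`-subgroup of `Sym(X)` normalized by `Q` is trivial. -/
theorem statement17 {p : ℕ} (hp : p.Prime) {X : Type*} [Finite X]
    (Q : Subgroup (Equiv.Perm X)) (htrans : ∀ x y : X, ∃ σ ∈ Q, σ x = y)
    (hnd : ¬ p ∣ Nat.card X)
    (E : Subgroup (Equiv.Perm X)) (hE : IsPGroup p ↥E)
    (hnorm : ∀ q ∈ Q, ∀ e ∈ E, q * e * q⁻¹ ∈ E) :
    E = ⊥ :=
  statement17_general hp Q htrans hnd E hE hnorm

end QF
end
end

section
/- Let X be a finite poset, x ∈ X, and n ≥ 0. Set X_{<x} = {y ∈ X : y < x} and X_{>x} = {y ∈ X : y > x}. Suppose that H̃_m(X_{<x} * X_{>x}) = 0 for all m with −1 ≤ m ≤ n−1, where * denotes the join of posets. Then the inclusion of posets X ∖ {x} ↪ X induces an isomorphism H̃_m(X ∖ {x}) → H̃_m(X) for every m ≤ n−1 and a surjection H̃_n(X ∖ {x}) → H̃_n(X). -/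
attribute [local instance] Classical.propDecidable

noncomputable section

namespace QF

/-!
Simplices of the order complex through `x` are cones `x * c` over simplices `c` of the link
`α_{<x} * α_{>x}`, and up to the sign `(-1) ^ #{y ∈ s | y < x}` and a global minus sign, the
boundary operator commutes with coning. Hence a chain `g` of `α` whose boundary vanishes on
every simplex through `x` restricts to a cycle of the link; if that cycle bounds `v`, then
`g + ∂(x * v)` has the same boundary as `g` and avoids `x`. Applied to cycles this gives
surjectivity, applied to chains bounding a cycle of `α ∖ {x}` it gives injectivity.
-/

open Finset

lemma _root_.Finset.covBy_iff_subset_and_card_add_one {β : Type*} {s t : Finset β} :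
    t ⋖ s ↔ t ⊆ s ∧ t.card + 1 = s.card := by
  rw [Finset.covBy_iff_card_sdiff_eq_one]
  refine and_congr_right fun h => ?_
  have := card_le_card h
  rw [card_sdiff_of_subset h]
  omega

section Boundary

variable {β : Type*} [PartialOrder β]

lemma bdryCoeff_of_not_covBy {s t : Finset β} (h : ¬ t ⋖ s) : bdryCoeff s t = 0 :=
  if_neg (by rwa [← Finset.covBy_iff_subset_and_card_add_one])

lemma covBy_of_bdryCoeff_ne_zero {s t : Finset β} (h : bdryCoeff s t ≠ 0) : t ⋖ s :=
  not_not.1 (mt bdryCoeff_of_not_covBy h)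

lemma bdryCoeff_insert {t : Finset β} {w : β} (hw : w ∉ t) :
    bdryCoeff (insert w t) t = (-1) ^ (t.filter (· < w)).card := by
  rw [bdryCoeff, if_pos (Finset.covBy_iff_subset_and_card_add_one.1 (covBy_insert hw)),
    insert_sdiff_cancel hw, sum_singleton, filter_insert, if_neg (lt_irrefl w)]

lemma SuppOn.add {S : Set β} {k : ℕ} {f g : Finset β → ℚ} (hf : SuppOn S k f)
    (hg : SuppOn S k g) : SuppOn S k (f + g) := fun s hs =>
  if hfs : f s = 0 then hg s fun hgs => hs (by simp [hfs, hgs]) else hf s hfs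

lemma SuppOn.neg {S : Set β} {k : ℕ} {f : Finset β → ℚ} (hf : SuppOn S k f) :
    SuppOn S k (-f) := fun s hs => hf s (by simpa using hs)

variable [Fintype β]

lemma bdryFun_eq_sum (f : Finset β → ℚ) (t : Finset β) :
    bdryFun f t = ∑ s, bdryCoeff s t * f s :=
  finsum_eq_sum_of_fintype _

lemma bdryFun_add (f g : Finset β → ℚ) : bdryFun (f + g) = bdryFun f + bdryFun g := by
  funext t
  simp only [Pi.add_apply, bdryFun_eq_sum, mul_add, sum_add_distrib]

lemma bdryFun_neg (f : Finset β → ℚ) : bdryFun (-f) = -bdryFun f := by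
  funext t
  simp only [Pi.neg_apply, bdryFun_eq_sum, mul_neg, sum_neg_distrib]

lemma SuppOn.bdryFun {S : Set β} {k : ℕ} {h : Finset β → ℚ} (hh : SuppOn S (k + 1) h) :
    SuppOn S k (bdryFun h) := by
  intro t ht
  rw [bdryFun_eq_sum] at ht
  obtain ⟨s, -, hs⟩ := exists_ne_zero_of_sum_ne_zero ht
  obtain ⟨hst, hcard⟩ := Finset.covBy_iff_subset_and_card_add_one.1
    (covBy_of_bdryCoeff_ne_zero (left_ne_zero_of_mul hs))
  obtain ⟨hs_card, hs_chain, hsS⟩ := hh s (right_ne_zero_of_mul hs)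
  have hst' : (t : Set β) ⊆ s := coe_subset.2 hst
  exact ⟨by omega, hs_chain.mono hst', hst'.trans hsS⟩

lemma sum_bdryCoeff_mul_bdryCoeff_insert_insert {u : Finset β} {a b : β} (hab : a < b)
    (ha : a ∉ u) (hb : b ∉ u) :
    ∑ t, bdryCoeff t u * bdryCoeff (insert a (insert b u)) t = 0 := by
  have hab' : a ≠ b := hab.ne
  have hne : insert a u ≠ insert b u := fun h =>
    hb ((mem_insert.1 (h ▸ mem_insert_self b u)).resolve_left hab'.symm)
  rw [Fintype.sum_eq_add (insert a u) (insert b u) hne]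
  · rw [insert_comm, bdryCoeff_insert ha, bdryCoeff_insert hb,
      bdryCoeff_insert (by simp [hab'.symm, hb]), insert_comm,
      bdryCoeff_insert (by simp [hab', ha]), filter_insert, filter_insert, if_pos hab,
      if_neg hab.not_gt, card_insert_of_notMem (by simp [ha]), pow_succ]
    ring
  · rintro t ⟨hta, htb⟩
    by_contra h
    obtain ⟨w, hwu, rfl⟩ :=
      (covBy_of_bdryCoeff_ne_zero (left_ne_zero_of_mul h)).exists_finset_insert
    have hw := (covBy_of_bdryCoeff_ne_zero (right_ne_zero_of_mul h)).le (mem_insert_self w u)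
    simp only [mem_insert] at hw
    rcases hw with rfl | rfl | hw
    exacts [hta rfl, htb rfl, hwu hw]

lemma sum_bdryCoeff_mul_bdryCoeff_eq_zero {s : Finset β} (hs : IsChain (· ≤ ·) (s : Set β))
    (u : Finset β) : ∑ t, bdryCoeff t u * bdryCoeff s t = 0 := by
  by_contra hsum
  obtain ⟨t, -, h⟩ := exists_ne_zero_of_sum_ne_zero hsum
  obtain ⟨a, hau, rfl⟩ := (covBy_of_bdryCoeff_ne_zero (left_ne_zero_of_mul h)).exists_finset_insert
  obtain ⟨b, hbt, rfl⟩ := (covBy_of_bdryCoeff_ne_zero (right_ne_zero_of_mul h)).exists_finset_insert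
  have hba : b ≠ a := fun e => hbt (e ▸ mem_insert_self a u)
  have hbu : b ∉ u := fun hb => hbt (mem_insert_of_mem hb)
  rcases hs (by simp) (by simp) hba with hle | hle
  · exact hsum (sum_bdryCoeff_mul_bdryCoeff_insert_insert (hle.lt_of_ne hba) hbu hau)
  · rw [insert_comm] at hsum
    exact hsum (sum_bdryCoeff_mul_bdryCoeff_insert_insert (hle.lt_of_ne hba.symm) hau hbu)

lemma bdryFun_bdryFun {h : Finset β → ℚ} (hh : ∀ s, h s ≠ 0 → IsChain (· ≤ ·) (s : Set β)) :
    bdryFun (bdryFun h) = 0 := by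
  funext u
  simp only [bdryFun_eq_sum, mul_sum, Pi.zero_apply]
  rw [sum_comm]
  refine sum_eq_zero fun s _ => ?_
  by_cases hs : h s = 0
  · simp [hs]
  simp only [← mul_assoc, ← sum_mul, sum_bdryCoeff_mul_bdryCoeff_eq_zero (hh s hs), zero_mul]

end Boundary

section Cone

variable {β γ : Type*} [PartialOrder β] [PartialOrder γ]

def IsLink (x : β) (ι : γ ↪o β) : Prop :=
  Set.range ι = {y | y < x ∨ x < y}

def cone (x : β) (ι : γ ↪o β) (c : Finset γ) : Finset β :=
  insert x (c.map ι.toEmbedding)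

def coneSign (x : β) (s : Finset β) : ℚ :=
  (-1) ^ (s.filter (· < x)).card

variable {x : β} {ι : γ ↪o β}

lemma coneSign_mul_self (s : Finset β) : coneSign x s * coneSign x s = 1 := by
  rw [coneSign, ← pow_add, Even.neg_one_pow ⟨_, rfl⟩]

lemma coneSign_insert {s : Finset β} {y : β} (hy : y ∉ s) :
    coneSign x (insert y s) = (if y < x then -1 else 1) * coneSign x s := by
  rw [coneSign, coneSign, filter_insert]
  split_ifs
  · rw [card_insert_of_notMem fun h => hy (mem_of_mem_filter y h), pow_succ, mul_comm]
  · rw [one_mul]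

lemma mem_cone_self (c : Finset γ) : x ∈ cone x ι c :=
  mem_insert_self _ _

lemma cone_insert (c : Finset γ) (j : γ) :
    cone x ι (insert j c) = insert (ι j) (cone x ι c) := by
  simp [cone, insert_comm]

namespace IsLink

lemma mem_range_iff (hι : IsLink x ι) {y : β} : y ∈ Set.range ι ↔ y < x ∨ x < y :=
  Set.ext_iff.1 hι y

lemma lt_or_gt (hι : IsLink x ι) (j : γ) : ι j < x ∨ x < ι j :=
  hι.mem_range_iff.1 ⟨j, rfl⟩

lemma apply_ne (hι : IsLink x ι) (j : γ) : ι j ≠ x :=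
  (hι.lt_or_gt j).elim LT.lt.ne LT.lt.ne'

lemma notMem_map (hι : IsLink x ι) (c : Finset γ) : x ∉ c.map ι.toEmbedding := by
  simpa using fun j _ => hι.apply_ne j

lemma card_cone (hι : IsLink x ι) (c : Finset γ) : (cone x ι c).card = c.card + 1 := by
  rw [cone, card_insert_of_notMem (hι.notMem_map c), card_map]

lemma cone_subset_cone_iff (hι : IsLink x ι) {c c' : Finset γ} :
    cone x ι c' ⊆ cone x ι c ↔ c' ⊆ c := by
  rw [cone, cone, insert_subset_insert_iff (hι.notMem_map c'), map_subset_map]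

lemma cone_covBy_cone_iff (hι : IsLink x ι) {c c' : Finset γ} :
    cone x ι c' ⋖ cone x ι c ↔ c' ⋖ c := by
  simp only [Finset.covBy_iff_subset_and_card_add_one, hι.cone_subset_cone_iff, hι.card_cone,
    add_left_inj]

lemma cone_injective (hι : IsLink x ι) : Function.Injective (cone x ι) := fun _ _ h =>
  (hι.cone_subset_cone_iff.1 h.le).antisymm (hι.cone_subset_cone_iff.1 h.ge)

lemma isChain_cone_iff (hι : IsLink x ι) {c : Finset γ} :
    IsChain (· ≤ ·) (cone x ι c : Set β) ↔ IsChain (· ≤ ·) (c : Set γ) := by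
  rw [cone, coe_insert, coe_map, RelEmbedding.coe_toEmbedding]
  refine ⟨fun h => IsChain.image_embedding_iff.1 (h.mono (Set.subset_insert _ _)), fun h => ?_⟩
  refine (h.image ι).insert fun _ ⟨j, _, hj⟩ _ => hj ▸ ?_
  exact (hι.lt_or_gt j).symm.imp le_of_lt le_of_lt

lemma mem_range_cone (hι : IsLink x ι) {s : Finset β} (hxs : x ∈ s)
    (hs : IsChain (· ≤ ·) (s : Set β)) : s ∈ Set.range (cone x ι) := by
  refine ⟨s.preimage ι ι.injective.injOn, ?_⟩
  ext y
  simp only [cone, mem_insert, mem_map, mem_preimage, RelEmbedding.coe_toEmbedding]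
  constructor
  · rintro (rfl | ⟨j, hj, rfl⟩)
    exacts [hxs, hj]
  · intro hy
    by_cases hyx : y = x
    · exact Or.inl hyx
    obtain ⟨j, rfl⟩ := hι.mem_range_iff.2 <|
      (hs (mem_coe.2 hy) (mem_coe.2 hxs) hyx).imp (·.lt_of_ne hyx) (·.lt_of_ne' hyx)
    exact Or.inr ⟨j, hy, rfl⟩

lemma card_filter_lt_cone (hι : IsLink x ι) (c : Finset γ) (j : γ) :
    ((cone x ι c).filter (· < ι j)).card = (c.filter (· < j)).card + if x < ι j then 1 else 0 := by
  have hmap : (c.map ι.toEmbedding).filter (· < ι j) = (c.filter (· < j)).map ι.toEmbedding := by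
    rw [filter_map]
    congr 1
    exact filter_congr fun _ _ => ι.lt_iff_lt
  rw [cone, filter_insert, hmap]
  split_ifs
  · rw [card_insert_of_notMem (hι.notMem_map _), card_map]
  · rw [card_map, add_zero]

lemma bdryCoeff_cone (hι : IsLink x ι) (c c' : Finset γ) :
    bdryCoeff (cone x ι c) (cone x ι c') =
      -coneSign x (cone x ι c') * bdryCoeff c c' * coneSign x (cone x ι c) := by
  by_cases h : c' ⋖ c
  · obtain ⟨j, hj, rfl⟩ := h.exists_finset_insert
    have hjc : ι j ∉ cone x ι c' := by simp [cone, hι.apply_ne, hj]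
    rw [cone_insert, bdryCoeff_insert hjc, bdryCoeff_insert hj, hι.card_filter_lt_cone,
      coneSign_insert hjc]
    have hsq := coneSign_mul_self (x := x) (cone x ι c')
    -- `x` lies below `ι j` (one more element precedes `ι j` in the cone) or above it (the sign
    -- of the cone flips), never both: this is the extra minus sign.
    rcases hι.lt_or_gt j with hlt | hlt
    · simp only [if_pos hlt, if_neg hlt.not_gt, add_zero]
      linear_combination -(-1 : ℚ) ^ (c'.filter (· < j)).card * hsq
    · simp only [if_pos hlt, if_neg hlt.not_gt, pow_succ]
      linear_combination (-1 : ℚ) ^ (c'.filter (· < j)).card * hsq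
  · rw [bdryCoeff_of_not_covBy h, bdryCoeff_of_not_covBy (mt hι.cone_covBy_cone_iff.1 h)]
    ring

end IsLink
end Cone

section ChainMaps

variable {β γ : Type*} [PartialOrder β] [PartialOrder γ] {x : β} {ι : γ ↪o β}

def coneMap (x : β) (ι : γ ↪o β) (v : Finset γ → ℚ) : Finset β → ℚ :=
  Function.extend (cone x ι) (fun c => coneSign x (cone x ι c) * v c) 0

def linkMap (x : β) (ι : γ ↪o β) (h : Finset β → ℚ) : Finset γ → ℚ :=
  fun c => coneSign x (cone x ι c) * h (cone x ι c)

lemma coneMap_of_notMem_range (v : Finset γ → ℚ) {s : Finset β}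
    (hs : s ∉ Set.range (cone x ι)) : coneMap x ι v s = 0 :=
  Function.extend_apply' _ _ _ hs

namespace IsLink

lemma coneMap_cone (hι : IsLink x ι) (v : Finset γ → ℚ) (c : Finset γ) :
    coneMap x ι v (cone x ι c) = coneSign x (cone x ι c) * v c :=
  hι.cone_injective.extend_apply _ _ _

lemma suppOn_coneMap (hι : IsLink x ι) {k : ℕ} {v : Finset γ → ℚ} (hv : SuppOn Set.univ k v) :
    SuppOn Set.univ (k + 1) (coneMap x ι v) := by
  intro s hs
  by_cases hr : s ∈ Set.range (cone x ι)
  · obtain ⟨c, rfl⟩ := hr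
    rw [hι.coneMap_cone] at hs
    obtain ⟨hcard, hchain, -⟩ := hv c (right_ne_zero_of_mul hs)
    exact ⟨by rw [hι.card_cone, hcard], hι.isChain_cone_iff.2 hchain, Set.subset_univ _⟩
  · exact absurd (coneMap_of_notMem_range v hr) hs

lemma suppOn_linkMap (hι : IsLink x ι) {k : ℕ} {h : Finset β → ℚ}
    (hh : SuppOn Set.univ (k + 1) h) : SuppOn Set.univ k (linkMap x ι h) := by
  intro c hc
  obtain ⟨hcard, hchain, -⟩ := hh _ (right_ne_zero_of_mul hc)
  exact ⟨by rw [hι.card_cone] at hcard; omega, hι.isChain_cone_iff.1 hchain, Set.subset_univ _⟩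

variable [Fintype β] [Fintype γ]

lemma sum_eq_sum_cone (hι : IsLink x ι) {F : Finset β → ℚ}
    (hF : ∀ s ∉ Set.range (cone x ι), F s = 0) : ∑ s, F s = ∑ c, F (cone x ι c) :=
  (Fintype.sum_of_injective _ hι.cone_injective _ F hF fun _ => rfl).symm

lemma bdryFun_coneMap (hι : IsLink x ι) (v : Finset γ → ℚ) (c₀ : Finset γ) :
    bdryFun (coneMap x ι v) (cone x ι c₀) = -coneMap x ι (bdryFun v) (cone x ι c₀) := by
  rw [bdryFun_eq_sum, hι.sum_eq_sum_cone fun s hs => by rw [coneMap_of_notMem_range v hs, mul_zero],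
    hι.coneMap_cone, bdryFun_eq_sum, mul_sum, ← sum_neg_distrib]
  refine sum_congr rfl fun c _ => ?_
  rw [hι.coneMap_cone, hι.bdryCoeff_cone]
  linear_combination (-coneSign x (cone x ι c₀) * bdryCoeff c c₀ * v c) *
    coneSign_mul_self (cone x ι c)

lemma bdryFun_linkMap (hι : IsLink x ι) {h : Finset β → ℚ}
    (hh : ∀ s, h s ≠ 0 → IsChain (· ≤ ·) (s : Set β)) (c₀ : Finset γ) :
    bdryFun (linkMap x ι h) c₀ = -linkMap x ι (bdryFun h) c₀ := by
  have hF : ∀ s ∉ Set.range (cone x ι), bdryCoeff s (cone x ι c₀) * h s = 0 := by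
    intro s hs
    by_contra hne
    have hxs : x ∈ s := (covBy_of_bdryCoeff_ne_zero (left_ne_zero_of_mul hne)).le (mem_cone_self c₀)
    exact hs (hι.mem_range_cone hxs (hh s (right_ne_zero_of_mul hne)))
  rw [bdryFun_eq_sum, linkMap, bdryFun_eq_sum, hι.sum_eq_sum_cone hF, mul_sum, ← sum_neg_distrib]
  refine sum_congr rfl fun c _ => ?_
  rw [linkMap, hι.bdryCoeff_cone]
  linear_combination -(bdryCoeff c c₀ * coneSign x (cone x ι c) * h (cone x ι c)) *
    coneSign_mul_self (cone x ι c₀)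

end IsLink
end ChainMaps

section Deletion

variable {β γ : Type*} [PartialOrder β] [PartialOrder γ] {x : β} {ι : γ ↪o β}

lemma SuppOn.ne_of_eq_zero {k : ℕ} {f : Finset β → ℚ} (hf : SuppOn Set.univ k f)
    (hfx : ∀ s : Finset β, x ∈ s → IsChain (· ≤ ·) (s : Set β) → f s = 0) :
    SuppOn {y | y ≠ x} k f := by
  intro s hs
  obtain ⟨hcard, hchain, -⟩ := hf s hs
  exact ⟨hcard, hchain, fun y hy (hyx : y = x) => hs (hfx s (hyx ▸ hy) hchain)⟩

lemma suppOn_zero_iff {S : Set β} {f : Finset β → ℚ} :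
    SuppOn S 0 f ↔ ∀ s, f s ≠ 0 → s = ∅ := by
  refine ⟨fun hf s hs => card_eq_zero.1 (hf s hs).1, fun hf s hs => ?_⟩
  rw [hf s hs]
  simp

lemma isBoundaryOn_zero {S : Set β} {k : ℕ} : IsBoundaryOn S k (0 : Finset β → ℚ) :=
  ⟨0, fun _ h => absurd rfl h, funext fun _ => by simp [bdryFun]⟩

variable [Fintype β] [Fintype γ]

theorem IsLink.exists_add_bdryFun_suppOn_ne (hι : IsLink x ι) {k : ℕ}
    (hlink : ∀ u : Finset γ → ℚ, IsCycleOn Set.univ k u → IsBoundaryOn Set.univ k u)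
    {g : Finset β → ℚ} (hg : SuppOn Set.univ (k + 1) g)
    (hgx : ∀ t, x ∈ t → bdryFun g t = 0) :
    ∃ w, SuppOn Set.univ (k + 2) w ∧ SuppOn {y | y ≠ x} (k + 1) (g + bdryFun w) := by
  have hchain : ∀ s, g s ≠ 0 → IsChain (· ≤ ·) (s : Set β) := fun s hs => (hg s hs).2.1
  have hcycle : IsCycleOn Set.univ k (linkMap x ι g) := by
    refine ⟨hι.suppOn_linkMap hg, funext fun c => ?_⟩
    rw [hι.bdryFun_linkMap hchain, linkMap, hgx _ (mem_cone_self c), mul_zero, neg_zero,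
      Pi.zero_apply]
  obtain ⟨v, hv, hvg⟩ := hlink _ hcycle
  have hw := hι.suppOn_coneMap hv
  refine ⟨coneMap x ι v, hw, (hg.add hw.bdryFun).ne_of_eq_zero fun s hxs hs => ?_⟩
  obtain ⟨c, rfl⟩ := hι.mem_range_cone hxs hs
  rw [Pi.add_apply, hι.bdryFun_coneMap, hι.coneMap_cone, hvg, linkMap]
  linear_combination -g (cone x ι c) * coneSign_mul_self (cone x ι c)

theorem IsLink.isBoundaryOn_ne (hι : IsLink x ι) {k : ℕ}
    (hlink : ∀ u : Finset γ → ℚ, IsCycleOn Set.univ k u → IsBoundaryOn Set.univ k u)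
    {f : Finset β → ℚ} (hf : SuppOn {y | y ≠ x} k f) (hfb : IsBoundaryOn Set.univ k f) :
    IsBoundaryOn {y | y ≠ x} k f := by
  obtain ⟨g, hg, rfl⟩ := hfb
  have hgx : ∀ t, x ∈ t → bdryFun g t = 0 := fun t hxt =>
    by_contra fun ht => (hf t ht).2.2 (mem_coe.2 hxt) rfl
  obtain ⟨w, hw, hgw⟩ := hι.exists_add_bdryFun_suppOn_ne hlink hg hgx
  exact ⟨g + bdryFun w, hgw, by rw [bdryFun_add, bdryFun_bdryFun fun s hs => (hw s hs).2.1,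
    add_zero]⟩

theorem IsLink.exists_isCycleOn_ne_sub_isBoundaryOn (hι : IsLink x ι) {k : ℕ}
    (hlink : ∀ u : Finset γ → ℚ, IsCycleOn Set.univ k u → IsBoundaryOn Set.univ k u)
    {f : Finset β → ℚ} (hf : IsCycleOn Set.univ (k + 1) f) :
    ∃ f', IsCycleOn {y | y ≠ x} (k + 1) f' ∧ IsBoundaryOn Set.univ (k + 1) (f - f') := by
  obtain ⟨w, hw, hfw⟩ := hι.exists_add_bdryFun_suppOn_ne hlink hf.1 fun t _ => by rw [hf.2]; rfl
  have hww : bdryFun (bdryFun w) = 0 := bdryFun_bdryFun fun s hs => (hw s hs).2.1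
  refine ⟨f + bdryFun w, ⟨hfw, by rw [bdryFun_add, hf.2, hww, add_zero]⟩, -w, hw.neg, ?_⟩
  rw [bdryFun_neg, sub_add_cancel_left]

end Deletion

section LinkOfPoint

variable {α : Type*} [PartialOrder α]

def linkEmbedding (x : α) : {y : α // y < x} ⊕ₗ {y : α // x < y} ↪o α :=
  OrderEmbedding.ofMapLEIff (fun j => Sum.elim Subtype.val Subtype.val (ofLex j)) <| by
    intro a b
    obtain ⟨a | a, rfl⟩ := toLex.surjective a <;> obtain ⟨b | b, rfl⟩ := toLex.surjective b
    · simp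
    · simp [(a.2.trans b.2).le]
    · simpa using fun h => (b.2.trans (a.2.trans_le h)).false
    · simp

lemma isLink_linkEmbedding (x : α) : IsLink x (linkEmbedding x) := by
  ext y
  constructor
  · rintro ⟨j, rfl⟩
    obtain ⟨a | a, rfl⟩ := toLex.surjective j
    exacts [Or.inl a.2, Or.inr a.2]
  · rintro (h | h)
    exacts [⟨toLex (Sum.inl ⟨y, h⟩), rfl⟩, ⟨toLex (Sum.inr ⟨y, h⟩), rfl⟩]

end LinkOfPoint

/-- if the join `X_{<x} * X_{>x}` has vanishing reduced homology in degrees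
`-1 ≤ m ≤ n - 1` (sizes `0 ≤ k ≤ n`), then the inclusion `X \ {x} ↪ X` induces an
isomorphism on reduced homology in degrees `≤ n - 1` (sizes `≤ n`) and a surjection in
degree `n` (size `n + 1`). -/
theorem statement19 {α : Type*} [PartialOrder α] [Finite α] (x : α) (n : ℕ)
    (hjoin : ∀ k ≤ n, ∀ f : Finset ({y : α // y < x} ⊕ₗ {y : α // x < y}) → ℚ,
      IsCycleOn Set.univ k f → IsBoundaryOn Set.univ k f) :
    (∀ k ≤ n,
      (∀ f : Finset α → ℚ, IsCycleOn {y : α | y ≠ x} k f →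
        IsBoundaryOn Set.univ k f → IsBoundaryOn {y : α | y ≠ x} k f) ∧
      (∀ f : Finset α → ℚ, IsCycleOn Set.univ k f →
        ∃ f' : Finset α → ℚ, IsCycleOn {y : α | y ≠ x} k f' ∧
          IsBoundaryOn Set.univ k (f - f'))) ∧
    (∀ f : Finset α → ℚ, IsCycleOn Set.univ (n + 1) f →
      ∃ f' : Finset α → ℚ, IsCycleOn {y : α | y ≠ x} (n + 1) f' ∧
        IsBoundaryOn Set.univ (n + 1) (f - f')) := by
  have := Fintype.ofFinite α
  have := Fintype.ofFinite ({y : α // y < x} ⊕ₗ {y : α // x < y})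
  have hι := isLink_linkEmbedding x
  refine ⟨fun k hk => ⟨fun f hf => hι.isBoundaryOn_ne (hjoin k hk) hf.1, fun f hf => ?_⟩,
    fun f hf => hι.exists_isCycleOn_ne_sub_isBoundaryOn (hjoin n le_rfl) hf⟩
  cases k with
  | zero =>
    refine ⟨f, ⟨suppOn_zero_iff.2 (suppOn_zero_iff.1 hf.1), hf.2⟩, ?_⟩
    rw [sub_self]
    exact isBoundaryOn_zero
  | succ m => exact hι.exists_isCycleOn_ne_sub_isBoundaryOn (hjoin m (by omega)) hf

end QF
end
end
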